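/- Let u₁(t) = tanh(t/√2) and W(s) = (1-s²)²/4. There exists μ₁ > 0 such that for every ω ∈ H¹(ℝ) with ∫_ℝ ω(t)·u₁'(t) dt = 0, one has ∫_ℝ (ω'(t))² + W''(u₁(t))·ω(t)² dt ≥ μ₁ · ∫_ℝ ω(t)² dt. -/

import Mathlib

/-!
With `c = √2 u₁` one has `c' = 1 - u₁²` and `c² - c' = 3u₁² - 1`, so the quadratic form
is `∫ (Aω)²` for `A = d/dt + c`, whose kernel is spanned by `u₁'`. For `ω ⊥ u₁'` the
adjoint equation `-v' + c v = ω` has the solution `v = -(∫_{-∞}^t ω u₁') / u₁'`, which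
vanishes at both ends (at `+∞` because of the orthogonality). Then `ω² = v Aω - (ωv)'` and
`v² ≤ ω² + (c v²)'` (that is, `A A* = -d²/dt² + 1 + u₁² ≥ 1`), and completing squares gives
pointwise `ω² ≤ ω'² + (3u₁² - 1)ω² + h'` with `h = c (ω² + v²) - 2ωv → 0` at `±∞`.
Hence `μ₁ = 1` works.
-/

open MeasureTheory Real Filter Topology Set

theorem Real.hasDerivAt_tanh (x : ℝ) : HasDerivAt tanh (1 - tanh x ^ 2) x := by
  have h := (hasDerivAt_sinh x).fun_div (hasDerivAt_cosh x) (cosh_pos x).ne'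
  have e : (cosh x * cosh x - sinh x * sinh x) / cosh x ^ 2 = 1 - tanh x ^ 2 := by
    rw [tanh_eq_sinh_div_cosh]; field_simp
  rw [e] at h
  exact h.congr_of_eventuallyEq (.of_forall tanh_eq_sinh_div_cosh)

theorem Real.tanh_eq_one_sub_exp_div (x : ℝ) :
    tanh x = (1 - exp (-2 * x)) / (1 + exp (-2 * x)) := by
  have h : exp (-2 * x) = exp (-x) / exp x := by
    rw [← exp_sub]; ring_nf
  rw [tanh_eq_sinh_div_cosh, sinh_eq, cosh_eq, h]
  field_simp

theorem Real.tendsto_tanh_atTop : Tendsto tanh atTop (𝓝 1) := by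
  have h : Tendsto (fun x : ℝ => exp (-2 * x)) atTop (𝓝 0) :=
    tendsto_exp_atBot.comp (tendsto_id.const_mul_atTop_of_neg (by norm_num))
  have := ((tendsto_const_nhds (x := (1:ℝ))).sub h).div
    ((tendsto_const_nhds (x := (1:ℝ))).add h) (by norm_num)
  rw [sub_zero, add_zero, div_one] at this
  exact this.congr fun x => (tanh_eq_one_sub_exp_div x).symm

theorem Real.tendsto_tanh_atBot : Tendsto tanh atBot (𝓝 (-1)) := by
  simpa [Function.comp_def] using (tendsto_tanh_atTop.comp tendsto_neg_atBot_atTop).neg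

theorem integrable_deriv_of_nonneg_of_abs_le {g g' : ℝ → ℝ} {C : ℝ}
    (hg : ∀ x, HasDerivAt g (g' x) x) (hg' : Continuous g') (hpos : ∀ x, 0 ≤ g' x)
    (hC : ∀ x, |g x| ≤ C) : Integrable g' := by
  refine integrable_of_intervalIntegral_norm_bounded (2 * C)
    (fun i => (hg'.integrableOn_Icc (a := -i) (b := i)).mono_set Ioc_subset_Icc_self)
    tendsto_neg_atTop_atBot tendsto_id (.of_forall fun i => ?_)
  have hnorm : ∀ x, ‖g' x‖ = g' x := fun x => norm_of_nonneg (hpos x)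
  simp only [hnorm]
  rw [intervalIntegral.integral_eq_sub_of_hasDerivAt (fun x _ => hg x)
    (hg'.intervalIntegrable _ _)]
  linarith [(abs_le.1 (hC i)).2, (abs_le.1 (hC (-i))).1]

theorem integral_le_sub_of_hasDerivAt_of_le {φ h h' : ℝ → ℝ} {m n : ℝ}
    (hφ : Integrable φ) (hderiv : ∀ x, HasDerivAt h (h' x) x) (hle : ∀ x, φ x ≤ h' x)
    (hbot : Tendsto h atBot (𝓝 m)) (htop : Tendsto h atTop (𝓝 n)) :
    ∫ x, φ x ≤ n - m := by
  refine le_of_tendsto_of_tendsto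
    (intervalIntegral_tendsto_integral hφ tendsto_neg_atTop_atBot tendsto_id)
    (htop.sub (hbot.comp tendsto_neg_atTop_atBot)) ?_
  filter_upwards [eventually_ge_atTop 0] with R hR
  exact intervalIntegral.integral_le_sub_of_hasDeriv_right_of_le (by rw [id]; linarith)
    (fun x _ => (hderiv x).continuousAt.continuousWithinAt)
    (fun x _ => (hderiv x).hasDerivWithinAt) hφ.integrableOn (fun x _ => hle x)

theorem tendsto_zero_of_memLp_two_of_deriv {f : ℝ → ℝ} (hf : Differentiable ℝ f)
    (h2 : MemLp f 2 volume) (h2' : MemLp (deriv f) 2 volume) :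
    Tendsto f atTop (𝓝 0) ∧ Tendsto f atBot (𝓝 0) := by
  have hderiv : ∀ x, HasDerivAt (fun x => f x ^ 2) (2 * (f x * deriv f x)) x := fun x => by
    simpa [mul_assoc] using (hf x).hasDerivAt.fun_pow 2
  have hint : Integrable fun x => 2 * (f x * deriv f x) := (h2.integrable_mul h2').const_mul 2
  have of_sq {l : Filter ℝ} (h : Tendsto (fun x => f x ^ 2) l (𝓝 0)) :
      Tendsto f l (𝓝 0) := by
      rw [tendsto_zero_iff_abs_tendsto_zero]
      simpa [sqrt_sq_eq_abs, Function.comp_def] using h.sqrt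
  exact ⟨of_sq (tendsto_zero_of_hasDerivAt_of_integrableOn_Ioi (a := 0) (fun x _ => hderiv x)
      hint.integrableOn h2.integrable_sq.integrableOn),
    of_sq (tendsto_zero_of_hasDerivAt_of_integrableOn_Iic (a := 0) (fun x _ => hderiv x)
      hint.integrableOn h2.integrable_sq.integrableOn)⟩

theorem hasDerivAt_integral_Iic {f : ℝ → ℝ} (hf : Continuous f) (hi : Integrable f)
    (t : ℝ) : HasDerivAt (fun t => ∫ s in Iic t, f s) (f t) t := by
  have h : (fun t => ∫ s in Iic t, f s) =
      fun t => (∫ s in Iic 0, f s) + ∫ s in (0)..t, f s := by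
    funext t
    rw [intervalIntegral.integral_Iic_sub_Iic hi.integrableOn hi.integrableOn |>.symm]
    ring
  rw [h]
  exact ((hf.integral_hasStrictDerivAt 0 t).hasDerivAt).const_add _

namespace AllenCahn

noncomputable def kink (t : ℝ) : ℝ := tanh (t / √2)

noncomputable def groundState (t : ℝ) : ℝ := 1 - kink t ^ 2

theorem hasDerivAt_kink (t : ℝ) : HasDerivAt kink (groundState t / √2) t :=
  ((hasDerivAt_tanh (t / √2)).comp t ((hasDerivAt_id t).div_const √2)).congr_deriv
    (by simp [groundState, kink, div_eq_mul_inv])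

theorem hasDerivAt_sqrt_two_mul_kink (t : ℝ) :
    HasDerivAt (fun t => √2 * kink t) (groundState t) t := by
  simpa [mul_div_cancel₀] using (hasDerivAt_kink t).const_mul √2

theorem hasDerivAt_groundState (t : ℝ) :
    HasDerivAt groundState (-(√2 * kink t * groundState t)) t := by
  refine ((hasDerivAt_kink t).fun_pow 2).const_sub 1 |>.congr_deriv ?_
  have h : (2 : ℝ) = √2 * √2 := (mul_self_sqrt zero_le_two).symm
  simp only [Nat.cast_ofNat, Nat.add_one_sub_one, pow_one]
  nth_rewrite 1 [h]
  field_simp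

theorem continuous_kink : Continuous kink :=
  continuous_iff_continuousAt.2 fun t => (hasDerivAt_kink t).continuousAt

theorem continuous_groundState : Continuous groundState :=
  continuous_const.sub (continuous_kink.pow 2)

theorem groundState_pos (t : ℝ) : 0 < groundState t :=
  sub_pos.2 (tanh_sq_lt_one _)

theorem groundState_le_one (t : ℝ) : groundState t ≤ 1 :=
  sub_le_self _ (sq_nonneg _)

theorem tendsto_kink_atTop : Tendsto kink atTop (𝓝 1) :=
  tendsto_tanh_atTop.comp (tendsto_id.atTop_div_const (by positivity))

theorem tendsto_kink_atBot : Tendsto kink atBot (𝓝 (-1)) :=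
  tendsto_tanh_atBot.comp (tendsto_id.atBot_div_const (by positivity))

theorem tendsto_groundState_atTop : Tendsto groundState atTop (𝓝 0) := by
  have h := (tendsto_kink_atTop.pow 2).const_sub 1
  rwa [one_pow, sub_self] at h

theorem tendsto_groundState_atBot : Tendsto groundState atBot (𝓝 0) := by
  have h := (tendsto_kink_atBot.pow 2).const_sub 1
  rwa [neg_one_sq, sub_self] at h

theorem integrable_groundState : Integrable groundState :=
  integrable_deriv_of_nonneg_of_abs_le (C := √2) hasDerivAt_sqrt_two_mul_kink
    continuous_groundState (fun t => (groundState_pos t).le) fun t => by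
      rw [abs_mul, abs_of_pos (by positivity), kink]
      exact mul_le_of_le_one_right (by positivity) (abs_tanh_lt_one _).le

theorem integrable_mul_groundState {ω : ℝ → ℝ} (hω : MemLp ω 2 volume) :
    Integrable fun t => ω t * groundState t := by
  refine (hω.integrable_sq.add integrable_groundState).div_const 2 |>.mono'
    (hω.1.mul continuous_groundState.aestronglyMeasurable) (.of_forall fun t => ?_)
  have h0 := groundState_pos t
  have h1 := groundState_le_one t
  rw [norm_mul, norm_of_nonneg h0.le, Real.norm_eq_abs]
  show |ω t| * groundState t ≤ (ω t ^ 2 + groundState t) / 2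
  nlinarith [sq_nonneg (|ω t| - groundState t), sq_abs (ω t)]

variable {ω : ℝ → ℝ}

noncomputable def adjointInverse (ω : ℝ → ℝ) (t : ℝ) : ℝ :=
  -(∫ s in Iic t, ω s * groundState s) / groundState t

theorem hasDerivAt_adjointInverse (hω : Continuous ω)
    (hi : Integrable fun t => ω t * groundState t) (t : ℝ) :
    HasDerivAt (adjointInverse ω) (√2 * kink t * adjointInverse ω t - ω t) t := by
  refine ((hasDerivAt_integral_Iic (hω.mul continuous_groundState) hi t).neg.fun_div
    (hasDerivAt_groundState t) (groundState_pos t).ne').congr_deriv ?_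
  have := (groundState_pos t).ne'
  simp only [adjointInverse, Pi.neg_apply, Pi.mul_apply]
  field_simp
  ring

theorem tendsto_adjointInverse_atTop (hω : Continuous ω)
    (hi : Integrable fun t => ω t * groundState t)
    (horth : ∫ t, ω t * groundState t = 0) (htop : Tendsto ω atTop (𝓝 0)) :
    Tendsto (adjointInverse ω) atTop (𝓝 0) := by
  have hint : Tendsto (fun t => ∫ s in Iic t, ω s * groundState s) atTop (𝓝 0) := by
    have h := tendsto_setIntegral_of_monotone (μ := volume) (s := Iic)
      (f := fun s => ω s * groundState s) (fun t => measurableSet_Iic)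
      (fun a b hab => Iic_subset_Iic.2 hab) (by rw [iUnion_Iic, integrableOn_univ]; exact hi)
    rwa [iUnion_Iic, setIntegral_univ, horth] at h
  refine HasDerivAt.lhopital_zero_atTop
    (.of_forall fun t => (hasDerivAt_integral_Iic (hω.mul continuous_groundState) hi t).neg)
    (.of_forall hasDerivAt_groundState) ?_ (by simpa using hint.neg) tendsto_groundState_atTop ?_
  · filter_upwards [tendsto_kink_atTop.eventually_ne one_ne_zero] with t ht
    exact neg_ne_zero.2 (mul_ne_zero (mul_ne_zero (by positivity) ht) (groundState_pos t).ne')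
  · have h := htop.div (tendsto_kink_atTop.const_mul √2) (by positivity)
    rw [zero_div] at h
    refine h.congr fun t => ?_
    have := (groundState_pos t).ne'
    simp only [Pi.div_apply, Pi.mul_apply]
    field_simp

theorem tendsto_adjointInverse_atBot (hω : Continuous ω)
    (hi : Integrable fun t => ω t * groundState t)
    (hbot : Tendsto ω atBot (𝓝 0)) : Tendsto (adjointInverse ω) atBot (𝓝 0) := by
  refine HasDerivAt.lhopital_zero_atBot
    (.of_forall fun t => (hasDerivAt_integral_Iic (hω.mul continuous_groundState) hi t).neg)
    (.of_forall hasDerivAt_groundState) ?_ (by simpa using (tendsto_integral_Iic_zero (μ := volume)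
      (f := fun s => ω s * groundState s) tendsto_id).neg) tendsto_groundState_atBot ?_
  · filter_upwards [tendsto_kink_atBot.eventually_ne (neg_ne_zero.2 one_ne_zero)] with t ht
    exact neg_ne_zero.2 (mul_ne_zero (mul_ne_zero (by positivity) ht) (groundState_pos t).ne')
  · have h := hbot.div (tendsto_kink_atBot.const_mul √2) (by simp)
    rw [zero_div] at h
    refine h.congr fun t => ?_
    have := (groundState_pos t).ne'
    simp only [Pi.div_apply, Pi.mul_apply]
    field_simp

theorem sq_le_secondVariation_density_add_deriv (k w w' v : ℝ) :
    w ^ 2 ≤ w' ^ 2 + (3 * k ^ 2 - 1) * w ^ 2 + ((1 - k ^ 2) * (w ^ 2 + v ^ 2)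
      + √2 * k * (2 * w * w' + 2 * v * (√2 * k * v - w))
      - 2 * (w' * v + w * (√2 * k * v - w))) := by
  linear_combination (k ^ 2 * w ^ 2 - k ^ 2 * v ^ 2) * sq_sqrt zero_le_two
    + sq_nonneg (w' + √2 * k * w - v) + sq_nonneg (w - √2 * k * v) + sq_nonneg (k * v)

theorem integrable_secondVariation_density (h2 : MemLp ω 2 volume)
    (h2' : MemLp (deriv ω) 2 volume) :
    Integrable fun t => deriv ω t ^ 2 + (3 * kink t ^ 2 - 1) * ω t ^ 2 := by
  refine h2'.integrable_sq.add (h2.integrable_sq.bdd_mul (c := 2)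
    (by have := continuous_kink; fun_prop) (.of_forall fun t => ?_))
  have h0 := groundState_pos t
  have h1 := groundState_le_one t
  rw [groundState] at h0 h1
  rw [Real.norm_eq_abs, abs_le]
  constructor <;> linarith

theorem integral_sq_le_secondVariation (hω : Differentiable ℝ ω) (h2 : MemLp ω 2 volume)
    (h2' : MemLp (deriv ω) 2 volume) (horth : ∫ t, ω t * groundState t = 0) :
    ∫ t, ω t ^ 2 ≤ ∫ t, (deriv ω t ^ 2 + (3 * kink t ^ 2 - 1) * ω t ^ 2) := by
  obtain ⟨htop, hbot⟩ := tendsto_zero_of_memLp_two_of_deriv hω h2 h2'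
  have hi := integrable_mul_groundState h2
  have hv := hasDerivAt_adjointInverse hω.continuous hi
  set v := adjointInverse ω
  have hderiv : ∀ t, HasDerivAt (fun t => √2 * kink t * (ω t ^ 2 + v t ^ 2) - 2 * ω t * v t)
      (groundState t * (ω t ^ 2 + v t ^ 2) + √2 * kink t * (2 * ω t * deriv ω t
        + 2 * v t * (√2 * kink t * v t - ω t)) - 2 * (deriv ω t * v t
        + ω t * (√2 * kink t * v t - ω t))) t := fun t => by
    have hω' := (hω t).hasDerivAt
    refine ((hasDerivAt_sqrt_two_mul_kink t).fun_mul ((hω'.fun_pow 2).fun_add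
      ((hv t).fun_pow 2))).fun_sub ((hω'.const_mul 2).fun_mul (hv t)) |>.congr_deriv ?_
    simp only [Nat.cast_ofNat, Nat.add_one_sub_one, pow_one]
    ring
  have hlim {l : Filter ℝ} {a : ℝ} (hk : Tendsto kink l (𝓝 a)) (hω0 : Tendsto ω l (𝓝 0))
      (hv0 : Tendsto v l (𝓝 0)) :
      Tendsto (fun t => √2 * kink t * (ω t ^ 2 + v t ^ 2) - 2 * ω t * v t) l (𝓝 0) := by
    simpa using ((hk.const_mul √2).mul ((hω0.pow 2).add (hv0.pow 2))).sub
      ((hω0.const_mul 2).mul hv0)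
  have hQ := integrable_secondVariation_density h2 h2'
  have hφ : Integrable fun t => ω t ^ 2 - (deriv ω t ^ 2 + (3 * kink t ^ 2 - 1) * ω t ^ 2) :=
    h2.integrable_sq.sub hQ
  have key := integral_le_sub_of_hasDerivAt_of_le hφ hderiv
    (fun t => by
      rw [groundState]
      linarith [sq_le_secondVariation_density_add_deriv (kink t) (ω t) (deriv ω t) (v t)])
    (hlim tendsto_kink_atBot hbot (tendsto_adjointInverse_atBot hω.continuous hi hbot))
    (hlim tendsto_kink_atTop htop (tendsto_adjointInverse_atTop hω.continuous hi horth htop))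
  rw [integral_sub h2.integrable_sq hQ] at key
  linarith

end AllenCahn

/-- Spectral gap: there is `μ₁ > 0` such that for every `ω ∈ H¹(ℝ)` orthogonal to `u₁'`
in `L²(ℝ)`, `∫ (ω')² + W''(u₁)·ω² ≥ μ₁ ∫ ω²`, where `u₁(t) = tanh(t/√2)` and
`W''(s) = 3s² - 1`. -/
theorem stmt_11 (u₁ : ℝ → ℝ) (hu : ∀ t, u₁ t = Real.tanh (t / Real.sqrt 2)) :
    ∃ μ₁ > 0, ∀ ω : ℝ → ℝ, Differentiable ℝ ω →
      MemLp ω 2 (volume : Measure ℝ) → MemLp (deriv ω) 2 (volume : Measure ℝ) →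
      (∫ t : ℝ, ω t * deriv u₁ t) = 0 →
      μ₁ * ∫ t : ℝ, (ω t) ^ 2 ≤
        ∫ t : ℝ, ((deriv ω t) ^ 2 + (3 * (u₁ t) ^ 2 - 1) * (ω t) ^ 2) := by
  obtain rfl : u₁ = AllenCahn.kink := funext hu
  refine ⟨1, one_pos, fun ω hω h2 h2' horth => ?_⟩
  have hderiv : deriv AllenCahn.kink = fun t => AllenCahn.groundState t / √2 :=
    funext fun t => (AllenCahn.hasDerivAt_kink t).deriv
  simp only [hderiv, ← mul_div_assoc, integral_div, div_eq_zero_iff, sqrt_eq_zero'] at horth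
  simpa using
    AllenCahn.integral_sq_le_secondVariation hω h2 h2' (horth.resolve_right (by norm_num))
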